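/- arXiv:1404.6724 — 3 statements merged into one kernel-verified Lean document; each statement's English description precedes it below -/
import Mathlib

section
/- For any finite nonempty sets A and B with i.i.d. continuous hash values, min h(A ∪ B) ∈ h(A ∩ B) if and only if min h(A) = min h(B). -/
/-! The minimum over `A ∪ B` is the smaller of the two minima. If it is attained in `A ∩ B`, it
bounds both minima from above, so they are equal. Conversely, if the minima are equal, the
minimisers in `A` and in `B` have the same hash and hence, by injectivity, are the same element
of `A ∩ B`. -/

namespace Finset

variable {α β : Type*} [DecidableEq α] [LinearOrder β] {s t : Finset α} {f : α → β}

theorem inf'_eq_inf'_of_inf'_union_mem_image_inter (hs : s.Nonempty) (ht : t.Nonempty)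
    (hmem : (s ∪ t).inf' (hs.mono subset_union_left) f ∈ (s ∩ t).image f) :
    s.inf' hs f = t.inf' ht f := by
  obtain ⟨x, hx, hfx⟩ := mem_image.1 hmem
  rw [inf'_union hs ht] at hfx
  have hs_le : s.inf' hs f ≤ f x := inf'_le f (mem_of_mem_inter_left hx)
  have ht_le : t.inf' ht f ≤ f x := inf'_le f (mem_of_mem_inter_right hx)
  rw [hfx] at hs_le ht_le
  exact le_antisymm (le_inf_iff.1 hs_le).2 (le_inf_iff.1 ht_le).1

theorem inf'_union_mem_image_inter_of_inf'_eq (hs : s.Nonempty) (ht : t.Nonempty)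
    (hf : Set.InjOn f ↑(s ∪ t)) (heq : s.inf' hs f = t.inf' ht f) :
    (s ∪ t).inf' (hs.mono subset_union_left) f ∈ (s ∩ t).image f := by
  obtain ⟨x, hx, hsx⟩ := exists_mem_eq_inf' hs f
  obtain ⟨y, hy, hty⟩ := exists_mem_eq_inf' ht f
  have hxy : x = y :=
    hf (mem_coe.2 (mem_union_left t hx)) (mem_coe.2 (mem_union_right s hy))
      (hsx.symm.trans (heq.trans hty))
  subst hxy
  rw [inf'_union hs ht, ← heq, inf_idem, hsx]
  exact mem_image_of_mem f (mem_inter.2 ⟨hx, hy⟩)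

end Finset

/-- For finite nonempty sets `A`, `B` and hash values that are all distinct
(as happens almost surely for i.i.d. continuous values, modeled here by `h`
being injective on `A ∪ B`), `min h(A ∪ B) ∈ h(A ∩ B)` iff
`min h(A) = min h(B)`. -/
theorem stmt2 {U : Type*} [DecidableEq U] (h : U → ℝ) (A B : Finset U)
    (hA : A.Nonempty) (hB : B.Nonempty)
    (hinj : Set.InjOn h (↑(A ∪ B) : Set U)) :
    (A ∪ B).inf' (hA.mono Finset.subset_union_left) h ∈ (A ∩ B).image h ↔
      A.inf' hA h = B.inf' hB h :=
  ⟨Finset.inf'_eq_inf'_of_inf'_union_mem_image_inter hA hB,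
    Finset.inf'_union_mem_image_inter_of_inf'_eq hA hB hinj⟩
end

section
/- For real numbers p ∈ [0,1] and k ≥ 0 with pk ≤ √2 − 1 and pk < 1, it holds that 1 − pk ≥ (1 − p)^{(1+pk)·k}. -/
/-!
Since `1 - p ≤ exp (-p)`, the left side is at most `exp (-(t + t²))` with `t = p k`. The bound
`exp (-(t + t²)) ≤ 1 - t` then follows from `exp x ≥ 1 + x + x² / 2`; it reduces to
`1 - t - t² - t³ ≥ 0`, which holds as soon as `t² + 2t ≤ 1`, i.e. `t ≤ √2 - 1`.
-/

open Real

lemma one_sub_rpow_le_exp_neg_mul {p e : ℝ} (hp : p ≤ 1) (he : 0 ≤ e) :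
    (1 - p) ^ e ≤ exp (-p * e) := by
  rw [exp_mul]
  exact rpow_le_rpow (by linarith) (one_sub_le_exp_neg p) he

lemma exp_neg_add_sq_le_one_sub {t : ℝ} (ht0 : 0 ≤ t) (ht : t ≤ √2 - 1) :
    exp (-(t + t ^ 2)) ≤ 1 - t := by
  have hsq : (1 + t) ^ 2 ≤ 2 := by
    calc (1 + t) ^ 2 ≤ √2 ^ 2 := by gcongr; linarith
      _ = 2 := sq_sqrt zero_le_two
  have ht1 : t ≤ 1 := by nlinarith
  have hexp := quadratic_le_exp_of_nonneg (by positivity : 0 ≤ t + t ^ 2)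
  have hprod : 1 ≤ (1 - t) * exp (t + t ^ 2) := by
    nlinarith [mul_le_mul_of_nonneg_left hexp (sub_nonneg.2 ht1), mul_nonneg ht0 ht0]
  rw [exp_neg, inv_le_iff_one_le_mul₀ (exp_pos _)]
  linarith

theorem stmt3_general (p k : ℝ) (hp : p ∈ Set.Icc (0:ℝ) 1) (hk : 0 ≤ k)
    (h1 : p * k ≤ Real.sqrt 2 - 1) :
    (1 - p) ^ ((1 + p * k) * k) ≤ 1 - p * k := by
  obtain ⟨hp0, hp1⟩ := hp
  calc (1 - p) ^ ((1 + p * k) * k) ≤ exp (-p * ((1 + p * k) * k)) :=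
        one_sub_rpow_le_exp_neg_mul hp1 (by positivity)
    _ = exp (-(p * k + (p * k) ^ 2)) := by ring_nf
    _ ≤ 1 - p * k := exp_neg_add_sq_le_one_sub (mul_nonneg hp0 hk) h1

/-- For `p ∈ [0,1]` and `k ≥ 0` with `pk ≤ √2 − 1` and `pk < 1`, we have
`1 − pk ≥ (1 − p) ^ ((1 + pk)·k)` (real power). -/
theorem stmt3 (p k : ℝ) (hp : p ∈ Set.Icc (0:ℝ) 1) (hk : 0 ≤ k)
    (h1 : p * k ≤ Real.sqrt 2 - 1) (h2 : p * k < 1) :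
    (1 - p) ^ ((1 + p * k) * k) ≤ 1 - p * k :=
  stmt3_general p k hp hk h1
end

section
/- Suppose each key x in a set S of n keys fails to be a representative only if either (a) x lands in a designated 'query group' (probability ≤ 1/|Σ| per key), or (b) some other key lands in the same group and same bin as x (probability ≤ 1/|Σ| per other key for same group, times ℓ/n for same bin, by independence). Then E[|R|] ≥ n(1 − 1/|Σ| − (n−1)·ℓ/(n·|Σ|)) ≥ n(1 − 2ℓ/|Σ|) for ℓ ≥ 1. -/
open MeasureTheory

/-!
By linearity of expectation, `E[|R|] = ∑_{x ∈ S} Pr[x ∈ R]`, and each summand is at least one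
minus the failure bound. For the weaker bound, `1 / |Σ| ≤ ℓ / |Σ|` and, since
`(n - 1) / n ≤ 1`, the collision term `(n - 1) ℓ / (n |Σ|)` is at most `ℓ / |Σ|`.
-/

section RandomFinset

variable {U Ω : Type*} {R : Ω → Finset U} {S : Finset U}

lemma card_eq_sum_indicator_mem (hRS : ∀ ω, R ω ⊆ S) (ω : Ω) :
    ((R ω).card : ℝ) = ∑ x ∈ S, {ω | x ∈ R ω}.indicator 1 ω := by
  classical
  simp only [Set.indicator_apply, Set.mem_ofPred_eq, Pi.one_apply, Finset.sum_boole,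
    Finset.filter_mem_eq_inter, Finset.inter_eq_right.mpr (hRS ω)]

lemma integral_card_eq_sum_measureReal [MeasurableSpace Ω] (μ : Measure Ω) [IsFiniteMeasure μ]
    (hRS : ∀ ω, R ω ⊆ S) (hRmeas : ∀ x, MeasurableSet {ω | x ∈ R ω}) :
    ∫ ω, ((R ω).card : ℝ) ∂μ = ∑ x ∈ S, μ.real {ω | x ∈ R ω} := by
  simp_rw [card_eq_sum_indicator_mem hRS]
  rw [integral_finsetSum S fun x _ => (integrable_const 1).indicator (hRmeas x)]
  exact Finset.sum_congr rfl fun x _ => integral_indicator_one (hRmeas x)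

lemma card_mul_one_sub_le_integral_card [MeasurableSpace Ω] (μ : Measure Ω)
    [IsProbabilityMeasure μ] (hRS : ∀ ω, R ω ⊆ S)
    (hRmeas : ∀ x, MeasurableSet {ω | x ∈ R ω}) {p : ℝ}
    (hfail : ∀ x ∈ S, μ.real {ω | x ∉ R ω} ≤ p) :
    S.card * (1 - p) ≤ ∫ ω, ((R ω).card : ℝ) ∂μ := by
  rw [integral_card_eq_sum_measureReal μ hRS hRmeas, ← nsmul_eq_mul, ← Finset.sum_const]
  refine Finset.sum_le_sum fun x hx => ?_
  have hmem : μ.real {ω | x ∈ R ω} = 1 - μ.real {ω | x ∉ R ω} := by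
    rw [← Set.compl_ofPred, probReal_compl_eq_one_sub (hRmeas x), sub_sub_cancel]
  linarith [hfail x hx]

end RandomFinset

lemma one_sub_two_mul_div_le {n Sig ℓ : ℝ} (hn : 0 ≤ n) (hSig : 0 ≤ Sig) (hℓ : 1 ≤ ℓ) :
    1 - 2 * ℓ / Sig ≤ 1 - 1 / Sig - (n - 1) * ℓ / (n * Sig) := by
  have hone : 1 / Sig ≤ ℓ / Sig := by gcongr
  have hfrac : (n - 1) * ℓ / (n * Sig) ≤ ℓ / Sig := by
    rw [mul_div_mul_comm]
    exact mul_le_of_le_one_left (by positivity) (div_le_one_of_le₀ (by linarith) hn)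
  linarith [show 2 * ℓ / Sig = ℓ / Sig + ℓ / Sig by ring]

theorem stmt16_general {U : Type*}
    {Ω : Type*} [MeasurableSpace Ω] (μ : Measure Ω) [IsProbabilityMeasure μ]
    (S : Finset U) (n : ℕ) (hn : S.card = n)
    (Sig ℓ : ℝ) (hSig : 1 ≤ Sig) (hℓ : 1 ≤ ℓ)
    (R : Ω → Finset U) (hRS : ∀ ω, R ω ⊆ S)
    (hRmeas : ∀ x : U, MeasurableSet {ω | x ∈ R ω})
    (hfail : ∀ x ∈ S, (μ {ω | x ∉ R ω}).toReal ≤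
      1 / Sig + (n - 1) * (1 / Sig) * (ℓ / n)) :
    (n : ℝ) * (1 - 1 / Sig - (n - 1) * ℓ / (n * Sig)) ≤
        ∫ ω, ((R ω).card : ℝ) ∂μ
    ∧ (n : ℝ) * (1 - 2 * ℓ / Sig) ≤
        (n : ℝ) * (1 - 1 / Sig - (n - 1) * ℓ / (n * Sig)) := by
  refine ⟨?_, mul_le_mul_of_nonneg_left
    (one_sub_two_mul_div_le n.cast_nonneg (by linarith) hℓ) n.cast_nonneg⟩
  have h := card_mul_one_sub_le_integral_card μ hRS hRmeas hfail
  rw [hn] at h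
  convert h using 2
  ring

/-- Expected number of representatives. `R` is a random subset of the fixed
set `S` of `n ≥ 1` keys, and each key `x ∈ S` fails to be a representative
with probability at most `1/|Σ| + (n−1)·(1/|Σ|)·(ℓ/n)` (it lands in the query
group, or some other key lands in its group and bin). Then
`E[|R|] ≥ n(1 − 1/|Σ| − (n−1)·ℓ/(n·|Σ|)) ≥ n(1 − 2ℓ/|Σ|)` for `ℓ ≥ 1`. -/
theorem stmt16 {U : Type*} [DecidableEq U]
    {Ω : Type*} [MeasurableSpace Ω] (μ : Measure Ω) [IsProbabilityMeasure μ]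
    (S : Finset U) (n : ℕ) (hn : S.card = n) (hn1 : 1 ≤ n)
    (Sig ℓ : ℝ) (hSig : 1 ≤ Sig) (hℓ : 1 ≤ ℓ)
    (R : Ω → Finset U) (hRS : ∀ ω, R ω ⊆ S)
    (hRmeas : ∀ x : U, MeasurableSet {ω | x ∈ R ω})
    (hfail : ∀ x ∈ S, (μ {ω | x ∉ R ω}).toReal ≤
      1 / Sig + (n - 1) * (1 / Sig) * (ℓ / n)) :
    (n : ℝ) * (1 - 1 / Sig - (n - 1) * ℓ / (n * Sig)) ≤
        ∫ ω, ((R ω).card : ℝ) ∂μ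
    ∧ (n : ℝ) * (1 - 2 * ℓ / Sig) ≤
        (n : ℝ) * (1 - 1 / Sig - (n - 1) * ℓ / (n * Sig)) :=
  stmt16_general μ S n hn Sig ℓ hSig hℓ R hRS hRmeas hfail
end
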